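/- The solution set of the Landau-Ginzburg system for the blow-up of P^2 at three points, with potential W(z_1,z_2) = z_1 + z_2 + z_1 z_2 + 1/z_1 + 1/(z_1 z_2) + 1/z_2, consists of exactly the six points (1,1), (ρ,ρ), (ρ²,ρ²), (1,-1), (-1,1), (-1,-1) in (C*)², where ρ = e^{2πi/3}. -/

import Mathlib

/-!
Multiplied by `z₁z₂`, the two equations factor as `(z₁²z₂ - 1)(z₂ + 1) = 0` and
`(z₁z₂² - 1)(z₁ + 1) = 0`. If neither `z₁` nor `z₂` is `-1`, then `z₁²z₂ = z₁z₂² = 1` forces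
`z₁ = z₂` with `z₁³ = 1`, giving the three points on the diagonal; otherwise one of the linear
factors vanishes and the other equation pins down the remaining coordinate as `±1`.
-/

open Complex

theorem IsPrimitiveRoot.pow_three_eq_one_iff {R : Type*} [CommRing R] [IsDomain R] {ζ x : R}
    (hζ : IsPrimitiveRoot ζ 3) : x ^ 3 = 1 ↔ x = 1 ∨ x = ζ ∨ x = ζ ^ 2 := by
  constructor
  · intro hx
    obtain ⟨i, hi, rfl⟩ := hζ.eq_pow_of_pow_eq_one hx
    interval_cases i <;> simp
  · rintro (rfl | rfl | rfl)
    · exact one_pow 3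
    · exact hζ.pow_eq_one
    · rw [← pow_mul, mul_comm, pow_mul, hζ.pow_eq_one, one_pow]

section LandauGinzburg

variable {K : Type*} [Field K] {x y : K}

theorem lg_first_eq_zero_iff (hx : x ≠ 0) (hy : y ≠ 0) :
    x + x * y - 1 / x - 1 / (x * y) = 0 ↔ (x ^ 2 * y - 1) * (y + 1) = 0 := by
  rw [← mul_left_inj' (mul_ne_zero hx hy), zero_mul]
  field_simp
  ring_nf

theorem lg_second_eq_zero_iff (hx : x ≠ 0) (hy : y ≠ 0) :
    y + x * y - 1 / (x * y) - 1 / y = 0 ↔ (x * y ^ 2 - 1) * (x + 1) = 0 := by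
  rw [← mul_left_inj' (mul_ne_zero hx hy), zero_mul]
  field_simp
  ring_nf

theorem lg_system_iff_factored :
    (x ≠ 0 ∧ y ≠ 0 ∧ x + x * y - 1 / x - 1 / (x * y) = 0 ∧
        y + x * y - 1 / (x * y) - 1 / y = 0) ↔
      (x ^ 2 * y - 1) * (y + 1) = 0 ∧ (x * y ^ 2 - 1) * (x + 1) = 0 := by
  constructor
  · rintro ⟨hx, hy, h₁, h₂⟩
    exact ⟨(lg_first_eq_zero_iff hx hy).1 h₁, (lg_second_eq_zero_iff hx hy).1 h₂⟩
  · rintro ⟨h₁, h₂⟩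
    have hx : x ≠ 0 := by rintro rfl; norm_num at h₂
    have hy : y ≠ 0 := by rintro rfl; norm_num at h₁
    exact ⟨hx, hy, (lg_first_eq_zero_iff hx hy).2 h₁, (lg_second_eq_zero_iff hx hy).2 h₂⟩

theorem factored_system_iff :
    (x ^ 2 * y - 1) * (y + 1) = 0 ∧ (x * y ^ 2 - 1) * (x + 1) = 0 ↔
      (x = y ∧ x ^ 3 = 1) ∨ (x = 1 ∧ y = -1) ∨ (x = -1 ∧ y = 1) ∨ (x = -1 ∧ y = -1) := by
  constructor
  · rintro ⟨h₁, h₂⟩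
    rcases mul_eq_zero.1 h₁ with h₁ | h₁ <;> rcases mul_eq_zero.1 h₂ with h₂ | h₂
    · have hxy : x * y ≠ 0 := fun h ↦ one_ne_zero (by linear_combination x * h - h₁ : (1 : K) = 0)
      obtain rfl : x = y := by
        have : x * y * (x - y) = 0 := by linear_combination h₁ - h₂
        exact sub_eq_zero.1 ((mul_eq_zero.1 this).resolve_left hxy)
      exact Or.inl ⟨rfl, by linear_combination h₁⟩
    · exact Or.inr (Or.inr (Or.inl ⟨by linear_combination h₂,
        by linear_combination h₁ - (x - 1) * y * h₂⟩))
    · exact Or.inr (Or.inl ⟨by linear_combination h₂ - x * (y - 1) * h₁,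
        by linear_combination h₁⟩)
    · exact Or.inr (Or.inr (Or.inr ⟨by linear_combination h₂, by linear_combination h₁⟩))
  · rintro (⟨rfl, h⟩ | ⟨rfl, rfl⟩ | ⟨rfl, rfl⟩ | ⟨rfl, rfl⟩)
    · constructor <;> linear_combination (x + 1) * h
    all_goals norm_num

theorem lg_system_iff {ζ : K} (hζ : IsPrimitiveRoot ζ 3) :
    (x ≠ 0 ∧ y ≠ 0 ∧ x + x * y - 1 / x - 1 / (x * y) = 0 ∧
        y + x * y - 1 / (x * y) - 1 / y = 0) ↔
      (x = 1 ∧ y = 1) ∨ (x = ζ ∧ y = ζ) ∨ (x = ζ ^ 2 ∧ y = ζ ^ 2) ∨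
        (x = 1 ∧ y = -1) ∨ (x = -1 ∧ y = 1) ∨ (x = -1 ∧ y = -1) := by
  rw [lg_system_iff_factored, factored_system_iff, hζ.pow_three_eq_one_iff]
  aesop

end LandauGinzburg

/-- The Landau-Ginzburg system of `Bl₃(ℙ²)` with potential
`W = z₁ + z₂ + z₁z₂ + 1/z₁ + 1/(z₁z₂) + 1/z₂` has exactly the six solutions
`(1,1), (ρ,ρ), (ρ²,ρ²), (1,-1), (-1,1), (-1,-1)`, `ρ = e^{2πi/3}`. -/
theorem LG_solutions_Bl3P2 :
    {p : ℂ × ℂ | p.1 ≠ 0 ∧ p.2 ≠ 0 ∧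
        p.1 + p.1 * p.2 - 1 / p.1 - 1 / (p.1 * p.2) = 0 ∧
        p.2 + p.1 * p.2 - 1 / (p.1 * p.2) - 1 / p.2 = 0} =
      {(1, 1), (Complex.exp (2 * Real.pi * I / 3), Complex.exp (2 * Real.pi * I / 3)),
        (Complex.exp (2 * Real.pi * I / 3) ^ 2, Complex.exp (2 * Real.pi * I / 3) ^ 2),
        (1, -1), (-1, 1), (-1, -1)} := by
  have hρ := Complex.isPrimitiveRoot_exp 3 three_ne_zero
  rw [Nat.cast_ofNat] at hρ
  ext ⟨x, y⟩
  simpa only [Set.mem_ofPred_eq, Set.mem_insert_iff, Set.mem_singleton_iff, Prod.mk.injEq]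
    using lg_system_iff hρ
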